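/- A proposition A has a classical proof (⊢ A is derivable in the classical multi-conclusion sequent calculus) if and only if its translation ‖A‖ has a constructive proof (⊢ ‖A‖ is derivable in the intuitionistic single-conclusion sequent calculus). -/

import Mathlib

/-- Terms: de Bruijn variables and a binary function symbol (union). -/
inductive Tm : Type where
  | var : Nat → Tm
  | cup : Tm → Tm → Tm
deriving DecidableEq

def Tm.rename (f : Nat → Nat) : Tm → Tm
  | .var n => .var (f n)
  | .cup s t => .cup (s.rename f) (t.rename f)

def Tm.subst (σ : Nat → Tm) : Tm → Tm
  | .var n => σ n
  | .cup s t => .cup (s.subst σ) (t.subst σ)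

/-- First-order formulas over Nat-indexed predicate symbols, de Bruijn binders. -/
inductive Fm : Type where
  | atom : Nat → List Tm → Fm
  | top : Fm
  | bot : Fm
  | neg : Fm → Fm
  | and : Fm → Fm → Fm
  | or : Fm → Fm → Fm
  | imp : Fm → Fm → Fm
  | all : Fm → Fm
  | ex : Fm → Fm
deriving DecidableEq

def liftR (f : Nat → Nat) : Nat → Nat
  | 0 => 0
  | n + 1 => f n + 1

def liftS (σ : Nat → Tm) : Nat → Tm
  | 0 => .var 0
  | n + 1 => (σ n).rename Nat.succ

def Fm.rename (f : Nat → Nat) : Fm → Fm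
  | .atom p l => .atom p (l.map (Tm.rename f))
  | .top => .top
  | .bot => .bot
  | .neg A => .neg (A.rename f)
  | .and A B => .and (A.rename f) (B.rename f)
  | .or A B => .or (A.rename f) (B.rename f)
  | .imp A B => .imp (A.rename f) (B.rename f)
  | .all A => .all (A.rename (liftR f))
  | .ex A => .ex (A.rename (liftR f))

def Fm.subst (σ : Nat → Tm) : Fm → Fm
  | .atom p l => .atom p (l.map (Tm.subst σ))
  | .top => .top
  | .bot => .bot
  | .neg A => .neg (A.subst σ)
  | .and A B => .and (A.subst σ) (B.subst σ)
  | .or A B => .or (A.subst σ) (B.subst σ)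
  | .imp A B => .imp (A.subst σ) (B.subst σ)
  | .all A => .all (A.subst (liftS σ))
  | .ex A => .ex (A.subst (liftS σ))

/-- Shift all free variables up by one. -/
def Fm.shift (A : Fm) : Fm := A.rename Nat.succ

/-- Instantiate the outermost bound variable with term `t` : `(t/x)A`. -/
def Fm.inst (t : Tm) (A : Fm) : Fm :=
  A.subst (fun n => match n with | 0 => t | n + 1 => .var n)

/-- Double negation. -/
def Fm.dn (A : Fm) : Fm := .neg (.neg A)

/-- Cut-free classical multi-conclusion sequent calculus (Figure 1). -/
inductive Cl : List Fm → List Fm → Prop where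
  | ax (A : Fm) : Cl [A] [A]
  | perm {Γ Γ' Δ Δ'} : Γ.Perm Γ' → Δ.Perm Δ' → Cl Γ Δ → Cl Γ' Δ'
  | contrL {Γ Δ A} : Cl (A :: A :: Γ) Δ → Cl (A :: Γ) Δ
  | contrR {Γ Δ A} : Cl Γ (A :: A :: Δ) → Cl Γ (A :: Δ)
  | weakL {Γ Δ A} : Cl Γ Δ → Cl (A :: Γ) Δ
  | weakR {Γ Δ A} : Cl Γ Δ → Cl Γ (A :: Δ)
  | topR {Γ Δ} : Cl Γ (.top :: Δ)
  | botL {Γ Δ} : Cl (.bot :: Γ) Δ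
  | negL {Γ Δ A} : Cl Γ (A :: Δ) → Cl (.neg A :: Γ) Δ
  | negR {Γ Δ A} : Cl (A :: Γ) Δ → Cl Γ (.neg A :: Δ)
  | andL {Γ Δ A B} : Cl (A :: B :: Γ) Δ → Cl (.and A B :: Γ) Δ
  | andR {Γ Δ A B} : Cl Γ (A :: Δ) → Cl Γ (B :: Δ) → Cl Γ (.and A B :: Δ)
  | orL {Γ Δ A B} : Cl (A :: Γ) Δ → Cl (B :: Γ) Δ → Cl (.or A B :: Γ) Δ
  | orR1 {Γ Δ A B} : Cl Γ (A :: Δ) → Cl Γ (.or A B :: Δ)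
  | orR2 {Γ Δ A B} : Cl Γ (B :: Δ) → Cl Γ (.or A B :: Δ)
  | impL {Γ Δ A B} : Cl Γ (A :: Δ) → Cl (B :: Γ) Δ → Cl (.imp A B :: Γ) Δ
  | impR {Γ Δ A B} : Cl (A :: Γ) (B :: Δ) → Cl Γ (.imp A B :: Δ)
  | allL {Γ Δ A} (t : Tm) : Cl (A.inst t :: Γ) Δ → Cl (.all A :: Γ) Δ
  | allR {Γ Δ A} : Cl (Γ.map Fm.shift) (A :: Δ.map Fm.shift) → Cl Γ (.all A :: Δ)
  | exL {Γ Δ A} : Cl (A :: Γ.map Fm.shift) (Δ.map Fm.shift) → Cl (.ex A :: Γ) Δ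
  | exR {Γ Δ A} (t : Tm) : Cl Γ (A.inst t :: Δ) → Cl Γ (.ex A :: Δ)

/-- Constructive (intuitionistic) single-conclusion sequent calculus:
the restriction of the classical calculus to sequents with at most one
conclusion, with the adapted ⇒-left rule. -/
inductive Intu : List Fm → Option Fm → Prop where
  | ax (A : Fm) : Intu [A] (some A)
  | perm {Γ Γ' Δ} : Γ.Perm Γ' → Intu Γ Δ → Intu Γ' Δ
  | contrL {Γ Δ A} : Intu (A :: A :: Γ) Δ → Intu (A :: Γ) Δ
  | weakL {Γ Δ A} : Intu Γ Δ → Intu (A :: Γ) Δ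
  | weakR {Γ A} : Intu Γ none → Intu Γ (some A)
  | topR {Γ} : Intu Γ (some .top)
  | botL {Γ Δ} : Intu (.bot :: Γ) Δ
  | negL {Γ A} : Intu Γ (some A) → Intu (.neg A :: Γ) none
  | negR {Γ A} : Intu (A :: Γ) none → Intu Γ (some (.neg A))
  | andL {Γ Δ A B} : Intu (A :: B :: Γ) Δ → Intu (.and A B :: Γ) Δ
  | andR {Γ A B} : Intu Γ (some A) → Intu Γ (some B) → Intu Γ (some (.and A B))
  | orL {Γ Δ A B} : Intu (A :: Γ) Δ → Intu (B :: Γ) Δ → Intu (.or A B :: Γ) Δ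
  | orR1 {Γ A B} : Intu Γ (some A) → Intu Γ (some (.or A B))
  | orR2 {Γ A B} : Intu Γ (some B) → Intu Γ (some (.or A B))
  | impL {Γ Δ A B} : Intu Γ (some A) → Intu (B :: Γ) Δ → Intu (.imp A B :: Γ) Δ
  | impR {Γ A B} : Intu (A :: Γ) (some B) → Intu Γ (some (.imp A B))
  | allL {Γ Δ A} (t : Tm) : Intu (A.inst t :: Γ) Δ → Intu (.all A :: Γ) Δ
  | allR {Γ A} : Intu (Γ.map Fm.shift) (some A) → Intu Γ (some (.all A))
  | exL {Γ Δ A} : Intu (A :: Γ.map Fm.shift) (Δ.map Fm.shift) → Intu (.ex A :: Γ) Δ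
  | exR {Γ A} (t : Tm) : Intu Γ (some (A.inst t)) → Intu Γ (some (.ex A))

/-- Dowek's translation ‖·‖: double negations both before and after each
connective and quantifier, atoms unchanged. -/
def Fm.bar : Fm → Fm
  | .atom p l => .atom p l
  | .top => Fm.dn .top
  | .bot => Fm.dn .bot
  | .neg A => Fm.dn (Fm.dn (.neg A.bar))
  | .and A B => Fm.dn (.and (Fm.dn A.bar) (Fm.dn B.bar))
  | .or A B => Fm.dn (.or (Fm.dn A.bar) (Fm.dn B.bar))
  | .imp A B => Fm.dn (.imp (Fm.dn A.bar) (Fm.dn B.bar))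
  | .all A => Fm.dn (.all (Fm.dn A.bar))
  | .ex A => Fm.dn (.ex (Fm.dn A.bar))

/-- The light translation |·|: like ‖·‖ but the outermost double negation
is removed. -/
def Fm.light : Fm → Fm
  | .atom p l => .atom p l
  | .top => .top
  | .bot => .bot
  | .neg A => .neg (Fm.dn A.bar)
  | .and A B => .and (Fm.dn A.bar) (Fm.dn B.bar)
  | .or A B => .or (Fm.dn A.bar) (Fm.dn B.bar)
  | .imp A B => .imp (Fm.dn A.bar) (Fm.dn B.bar)
  | .all A => .all (Fm.dn A.bar)
  | .ex A => .ex (Fm.dn A.bar)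

/-- A formula is atomic if it is of the form `atom p l`. -/
def Fm.isAtom : Fm → Prop
  | .atom _ _ => True
  | _ => False

/-!
Classical to constructive: by induction on a cut-free classical derivation of `Γ ⊢ Δ`, the
constructive calculus refutes `‖Γ‖, ¬|Δ|`, where `|·|` is the light translation. Since
`‖A‖ = ¬¬|A|` for non-atomic `A`, this refutation of `¬|A|` proves `‖A‖`; and `⊢ A` has no
cut-free classical proof when `A` is an atom.

Constructive to classical: a constructive derivation is a classical one, and classical
derivability only depends on formulas up to `¬¬B ≡ B` at any depth. Formulas with the same
normal form `collapse` are interderivable, and replacing the formulas of a derivation by ones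
with the same normal form is admissible. When a principal `¬A` is replaced by a formula `X` with
`A ≡ ¬X`, the premise is rebuilt with `¬X` in place of `A` on the other side, and inverting the
negation rule moves `X` back.
-/

namespace Tm

theorem subst_rename (σ : Nat → Tm) (f : Nat → Nat) (t : Tm) :
    (t.rename f).subst σ = t.subst (σ ∘ f) := by
  induction t <;> simp_all [rename, subst]

theorem subst_var : Tm.subst .var = id := by
  funext t
  induction t <;> simp_all [subst]

end Tm

theorem liftS_comp_liftR (σ : Nat → Tm) (f : Nat → Nat) :
    liftS σ ∘ liftR f = liftS (σ ∘ f) := by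
  funext n
  cases n <;> rfl

theorem liftS_var : liftS .var = .var := by
  funext n
  cases n <;> rfl

namespace Fm

theorem subst_rename (σ : Nat → Tm) (f : Nat → Nat) (A : Fm) :
    (A.rename f).subst σ = A.subst (σ ∘ f) := by
  induction A generalizing σ f <;> simp_all [rename, subst, Tm.subst_rename, liftS_comp_liftR]

theorem subst_var (A : Fm) : A.subst .var = A := by
  induction A <;> simp_all [subst, Tm.subst_var, liftS_var]

theorem inst_shift (t : Tm) (A : Fm) : A.shift.inst t = A := by
  rw [shift, inst, subst_rename]
  exact subst_var A

theorem shift_injective : Function.Injective shift :=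
  Function.LeftInverse.injective (inst_shift (.var 0))

/-- `(∀x A).shift = ∀x A.rename (liftR succ)`, so this undoes a shift under a binder. -/
theorem inst_var_zero_rename_liftR (A : Fm) :
    (A.rename (liftR .succ)).inst (.var 0) = A := by
  rw [inst, subst_rename]
  convert subst_var A
  funext n
  cases n <;> rfl

theorem bar_subst (σ : Nat → Tm) (A : Fm) : (A.subst σ).bar = A.bar.subst σ := by
  induction A generalizing σ <;> simp_all [subst, bar, dn]

theorem bar_rename (f : Nat → Nat) (A : Fm) : (A.rename f).bar = A.bar.rename f := by
  induction A generalizing f <;> simp_all [rename, bar, dn]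

theorem bar_inst (t : Tm) (A : Fm) : (A.inst t).bar = A.bar.inst t := bar_subst _ A

theorem bar_shift (A : Fm) : A.shift.bar = A.bar.shift := bar_rename _ A

theorem light_shift (A : Fm) : A.shift.light = A.light.shift := by
  cases A <;> simp [shift, rename, light, dn, bar_rename]

theorem bar_eq_dn_light {A : Fm} (h : ¬A.isAtom) : A.bar = A.light.dn := by
  cases A <;> first | exact absurd trivial h | rfl

def negate : Fm → Fm
  | .neg A => A
  | A => .neg A

/-- The normal form modulo `¬¬A ≡ A`, erasing pairs of negations at every depth. -/
def collapse : Fm → Fm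
  | .atom p l => .atom p l
  | .top => .top
  | .bot => .bot
  | .neg A => A.collapse.negate
  | .and A B => .and A.collapse B.collapse
  | .or A B => .or A.collapse B.collapse
  | .imp A B => .imp A.collapse B.collapse
  | .all A => .all A.collapse
  | .ex A => .ex A.collapse

theorem negate_of_ne_neg {A : Fm} (h : ∀ B, A ≠ .neg B) : A.negate = .neg A := by
  cases A <;> first | rfl | exact absurd rfl (h _)

theorem collapse_ne_neg_neg (A B : Fm) : A.collapse ≠ .neg (.neg B) := by
  induction A generalizing B with
  | neg A ih =>
    cases h : A.collapse <;> simp [collapse, negate, h]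
    rintro rfl
    exact ih _ h
  | _ => simp [collapse]

theorem collapse_ne_neg {A : Fm} (h : ∀ B, A ≠ .neg B) (B : Fm) : A.collapse ≠ .neg B := by
  cases A <;> first | exact absurd rfl (h _) | simp [collapse]

@[simp]
theorem collapse_dn (A : Fm) : A.dn.collapse = A.collapse := by
  change A.collapse.negate.negate = A.collapse
  cases h : A.collapse with
  | neg B =>
    rw [negate, negate_of_ne_neg]
    rintro C rfl
    exact collapse_ne_neg_neg A C h
  | _ => rfl

theorem collapse_neg_eq_comm {A B : Fm} (h : (neg A).collapse = B.collapse) :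
    A.collapse = (neg B).collapse := by
  rw [← collapse_dn A]
  exact congrArg negate h

theorem collapse_rename (f : Nat → Nat) (A : Fm) :
    (A.rename f).collapse = A.collapse.rename f := by
  induction A generalizing f with
  | neg A ih =>
    simp only [rename, collapse, ih]
    cases A.collapse <;> rfl
  | _ => simp_all [rename, collapse]

theorem collapse_subst (σ : Nat → Tm) (A : Fm) :
    (A.subst σ).collapse = A.collapse.subst σ := by
  induction A generalizing σ with
  | neg A ih =>
    simp only [subst, collapse, ih]
    cases A.collapse <;> rfl
  | _ => simp_all [subst, collapse]

theorem collapse_bar (A : Fm) : A.bar.collapse = A.collapse := by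
  induction A <;> simp_all [bar, collapse]

def mapChildren (f : Fm → Fm) : Fm → Fm
  | .neg A => .neg (f A)
  | .and A B => .and (f A) (f B)
  | .or A B => .or (f A) (f B)
  | .imp A B => .imp (f A) (f B)
  | .all A => .all (f A)
  | .ex A => .ex (f A)
  | A => A

def stripDN : Fm → Fm
  | .neg (.neg A) => A.stripDN
  | A => A

theorem mapChildren_collapse_stripDN (A : Fm) :
    A.stripDN.mapChildren collapse = A.collapse := by
  fun_induction stripDN A with
  | case1 A ih => rw [ih, ← collapse_dn]; rfl
  | case2 A hA =>
    cases A with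
    | neg B =>
      have hB : ∀ C, B ≠ .neg C := by
        rintro C rfl
        exact hA C rfl
      simp only [mapChildren, collapse, negate_of_ne_neg (collapse_ne_neg hB)]
    | _ => rfl

section stripDN

variable {A : Fm}

theorem stripDN_of_collapse_eq_atom {p : Nat} {l : List Tm} (h : A.collapse = .atom p l) :
    A.stripDN = .atom p l := by
  rw [← mapChildren_collapse_stripDN] at h
  cases hS : A.stripDN <;> simp_all [mapChildren]

theorem stripDN_of_collapse_eq_top (h : A.collapse = .top) : A.stripDN = .top := by
  rw [← mapChildren_collapse_stripDN] at h
  cases hS : A.stripDN <;> simp_all [mapChildren]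

theorem stripDN_of_collapse_eq_bot (h : A.collapse = .bot) : A.stripDN = .bot := by
  rw [← mapChildren_collapse_stripDN] at h
  cases hS : A.stripDN <;> simp_all [mapChildren]

theorem stripDN_of_collapse_eq_neg {a : Fm} (h : A.collapse = .neg a) :
    ∃ X, A.stripDN = .neg X ∧ X.collapse = a := by
  rw [← mapChildren_collapse_stripDN] at h
  cases hS : A.stripDN <;> simp_all [mapChildren]

theorem stripDN_of_collapse_eq_and {a b : Fm} (h : A.collapse = .and a b) :
    ∃ X Y, A.stripDN = .and X Y ∧ X.collapse = a ∧ Y.collapse = b := by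
  rw [← mapChildren_collapse_stripDN] at h
  cases hS : A.stripDN <;> simp_all [mapChildren]

theorem stripDN_of_collapse_eq_or {a b : Fm} (h : A.collapse = .or a b) :
    ∃ X Y, A.stripDN = .or X Y ∧ X.collapse = a ∧ Y.collapse = b := by
  rw [← mapChildren_collapse_stripDN] at h
  cases hS : A.stripDN <;> simp_all [mapChildren]

theorem stripDN_of_collapse_eq_imp {a b : Fm} (h : A.collapse = .imp a b) :
    ∃ X Y, A.stripDN = .imp X Y ∧ X.collapse = a ∧ Y.collapse = b := by
  rw [← mapChildren_collapse_stripDN] at h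
  cases hS : A.stripDN <;> simp_all [mapChildren]

theorem stripDN_of_collapse_eq_all {a : Fm} (h : A.collapse = .all a) :
    ∃ X, A.stripDN = .all X ∧ X.collapse = a := by
  rw [← mapChildren_collapse_stripDN] at h
  cases hS : A.stripDN <;> simp_all [mapChildren]

theorem stripDN_of_collapse_eq_ex {a : Fm} (h : A.collapse = .ex a) :
    ∃ X, A.stripDN = .ex X ∧ X.collapse = a := by
  rw [← mapChildren_collapse_stripDN] at h
  cases hS : A.stripDN <;> simp_all [mapChildren]

end stripDN

end Fm

def eraseNeg (X : Fm) (Δ : List Fm) : List Fm := Δ.filter (· ≠ .neg X)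

section eraseNeg

variable {X A : Fm} {Δ Δ' : List Fm}

@[simp]
theorem eraseNeg_nil : eraseNeg X [] = [] := rfl

@[simp]
theorem eraseNeg_cons_neg : eraseNeg X (.neg X :: Δ) = eraseNeg X Δ := by
  simp [eraseNeg]

theorem eraseNeg_cons_of_ne (h : A ≠ .neg X) : eraseNeg X (A :: Δ) = A :: eraseNeg X Δ := by
  simp [eraseNeg, h]

theorem eraseNeg_perm (p : Δ.Perm Δ') : (eraseNeg X Δ).Perm (eraseNeg X Δ') := p.filter _

theorem eraseNeg_sublist : (eraseNeg X Δ).Sublist Δ := List.filter_sublist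

theorem eraseNeg_cons_sublist : (eraseNeg X (A :: Δ)).Sublist (A :: eraseNeg X Δ) := by
  by_cases hA : A = .neg X
  · subst hA
    simp
  · rw [eraseNeg_cons_of_ne hA]

theorem eraseNeg_sublist_eraseNeg_cons : (eraseNeg X Δ).Sublist (eraseNeg X (A :: Δ)) :=
  (List.sublist_cons_self _ _).filter _

theorem eraseNeg_map_shift :
    eraseNeg X.shift (Δ.map Fm.shift) = (eraseNeg X Δ).map Fm.shift := by
  have h : Fm.neg X.shift = (Fm.neg X).shift := rfl
  simp [eraseNeg, List.filter_map, Function.comp_def, h, Fm.shift_injective.eq_iff]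

end eraseNeg

namespace Cl

section structural

variable {Γ Γ' Δ Δ' : List Fm} {A B : Fm}

theorem permL (p : Γ.Perm Γ') (h : Cl Γ Δ) : Cl Γ' Δ := perm p (.refl _) h

theorem permR (p : Δ.Perm Δ') (h : Cl Γ Δ) : Cl Γ Δ' := perm (.refl _) p h

theorem swapL (h : Cl (A :: B :: Γ) Δ) : Cl (B :: A :: Γ) Δ := permL (.swap _ _ _) h

theorem swapR (h : Cl Γ (A :: B :: Δ)) : Cl Γ (B :: A :: Δ) := permR (.swap _ _ _) h

theorem of_sublist_left (hs : Γ.Sublist Γ') (h : Cl Γ Δ) : Cl Γ' Δ := by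
  obtain ⟨l, hp⟩ := hs.exists_perm_append
  refine permL (List.perm_append_comm.trans hp.symm) ?_
  clear hp
  induction l with
  | nil => exact h
  | cons A l ih => exact weakL ih

theorem of_sublist_right (hs : Δ.Sublist Δ') (h : Cl Γ Δ) : Cl Γ Δ' := by
  obtain ⟨l, hp⟩ := hs.exists_perm_append
  refine permR (List.perm_append_comm.trans hp.symm) ?_
  clear hp
  induction l with
  | nil => exact h
  | cons A l ih => exact weakR ih

theorem of_stripDN_left (h : Cl (A.stripDN :: Γ) Δ) : Cl (A :: Γ) Δ := by
  fun_induction Fm.stripDN A with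
  | case1 A ih => exact negL (negR (ih h))
  | case2 A => exact h

theorem of_stripDN_right (h : Cl Γ (A.stripDN :: Δ)) : Cl Γ (A :: Δ) := by
  fun_induction Fm.stripDN A with
  | case1 A ih => exact negR (negL (ih h))
  | case2 A => exact h

end structural

theorem of_collapse_eq {A B : Fm} (h : A.collapse = B.collapse) : Cl [A] [B] := by
  suffices key : ∀ c A B, Fm.collapse A = c → Fm.collapse B = c → Cl [A] [B] from
    key _ A B rfl h.symm
  intro c
  induction c <;> intro A B hA hB <;> refine of_stripDN_left (of_stripDN_right ?_)
  case atom p l =>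
    rw [Fm.stripDN_of_collapse_eq_atom hA, Fm.stripDN_of_collapse_eq_atom hB]
    exact ax _
  case top => exact Fm.stripDN_of_collapse_eq_top hB ▸ topR
  case bot => exact Fm.stripDN_of_collapse_eq_bot hA ▸ botL
  case neg a ih =>
    obtain ⟨A₁, hA, hA₁⟩ := Fm.stripDN_of_collapse_eq_neg hA
    obtain ⟨B₁, hB, hB₁⟩ := Fm.stripDN_of_collapse_eq_neg hB
    rw [hA, hB]
    exact negR (swapL (negL (ih B₁ A₁ hB₁ hA₁)))
  case and a b iha ihb =>
    obtain ⟨A₁, A₂, hA, hA₁, hA₂⟩ := Fm.stripDN_of_collapse_eq_and hA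
    obtain ⟨B₁, B₂, hB, hB₁, hB₂⟩ := Fm.stripDN_of_collapse_eq_and hB
    rw [hA, hB]
    exact andL (andR (swapL (weakL (iha A₁ B₁ hA₁ hB₁))) (weakL (ihb A₂ B₂ hA₂ hB₂)))
  case or a b iha ihb =>
    obtain ⟨A₁, A₂, hA, hA₁, hA₂⟩ := Fm.stripDN_of_collapse_eq_or hA
    obtain ⟨B₁, B₂, hB, hB₁, hB₂⟩ := Fm.stripDN_of_collapse_eq_or hB
    rw [hA, hB]
    exact orL (orR1 (iha A₁ B₁ hA₁ hB₁)) (orR2 (ihb A₂ B₂ hA₂ hB₂))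
  case imp a b iha ihb =>
    obtain ⟨A₁, A₂, hA, hA₁, hA₂⟩ := Fm.stripDN_of_collapse_eq_imp hA
    obtain ⟨B₁, B₂, hB, hB₁, hB₂⟩ := Fm.stripDN_of_collapse_eq_imp hB
    rw [hA, hB]
    exact impR (swapL (impL (swapR (weakR (iha B₁ A₁ hB₁ hA₁)))
      (swapL (weakL (ihb A₂ B₂ hA₂ hB₂)))))
  case all a ih =>
    obtain ⟨A₁, hA, hA₁⟩ := Fm.stripDN_of_collapse_eq_all hA
    obtain ⟨B₁, hB, hB₁⟩ := Fm.stripDN_of_collapse_eq_all hB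
    rw [hA, hB]
    refine allR (allL (.var 0) ?_)
    rw [Fm.inst_var_zero_rename_liftR]
    exact ih A₁ B₁ hA₁ hB₁
  case ex a ih =>
    obtain ⟨A₁, hA, hA₁⟩ := Fm.stripDN_of_collapse_eq_ex hA
    obtain ⟨B₁, hB, hB₁⟩ := Fm.stripDN_of_collapse_eq_ex hB
    rw [hA, hB]
    refine exL (exR (.var 0) ?_)
    rw [Fm.inst_var_zero_rename_liftR]
    exact ih A₁ B₁ hA₁ hB₁

section inversion

variable {Γ Δ : List Fm} {X A : Fm}

theorem cons_eraseNeg_right (h : Cl Γ (eraseNeg X (A :: Δ))) : Cl Γ (A :: eraseNeg X Δ) :=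
  of_sublist_right eraseNeg_cons_sublist h

theorem cons_eraseNeg_left (h : Cl (eraseNeg X (A :: Γ)) Δ) : Cl (A :: eraseNeg X Γ) Δ :=
  of_sublist_left eraseNeg_cons_sublist h

/- Every copy of `¬X` is erased, not just one, so that the contraction case goes through. -/
theorem invert_negR_eraseNeg (h : Cl Γ Δ) (X : Fm) : Cl (X :: Γ) (eraseNeg X Δ) := by
  induction h generalizing X with
  | ax A =>
    by_cases hA : A = .neg X
    · subst hA
      exact swapL (negL (by simpa using ax X))
    · rw [eraseNeg_cons_of_ne hA]
      exact weakL (ax A)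
  | perm p₁ p₂ _ ih => exact perm (p₁.cons X) (eraseNeg_perm p₂) (ih X)
  | contrL _ ih => exact swapL (contrL (permL ((List.Perm.swap _ _ _).cons _) (swapL (ih X))))
  | @contrR _ _ A _ ih =>
    by_cases hA : A = .neg X
    · subst hA
      simpa using ih X
    · simpa [eraseNeg_cons_of_ne hA] using contrR (by simpa [eraseNeg_cons_of_ne hA] using ih X)
  | weakL _ ih => exact swapL (weakL (ih X))
  | weakR _ ih => exact of_sublist_right eraseNeg_sublist_eraseNeg_cons (ih X)
  | topR => rw [eraseNeg_cons_of_ne (by simp)]; exact topR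
  | botL => exact swapL botL
  | negL _ ih => exact swapL (negL (cons_eraseNeg_right (ih X)))
  | @negR _ _ A _ ih =>
    by_cases hA : A = X
    · subst hA
      simpa using contrL (ih A)
    · rw [eraseNeg_cons_of_ne (by simpa using hA)]
      exact negR (swapL (ih X))
  | andL _ ih => exact swapL (andL (permL ((List.Perm.swap _ _ _).cons _) (swapL (ih X))))
  | andR _ _ ih₁ ih₂ =>
    rw [eraseNeg_cons_of_ne (by simp)]
    exact andR (cons_eraseNeg_right (ih₁ X)) (cons_eraseNeg_right (ih₂ X))
  | orL _ _ ih₁ ih₂ => exact swapL (orL (swapL (ih₁ X)) (swapL (ih₂ X)))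
  | orR1 _ ih => rw [eraseNeg_cons_of_ne (by simp)]; exact orR1 (cons_eraseNeg_right (ih X))
  | orR2 _ ih => rw [eraseNeg_cons_of_ne (by simp)]; exact orR2 (cons_eraseNeg_right (ih X))
  | impL _ _ ih₁ ih₂ => exact swapL (impL (cons_eraseNeg_right (ih₁ X)) (swapL (ih₂ X)))
  | impR _ ih => rw [eraseNeg_cons_of_ne (by simp)]; exact impR (swapL (cons_eraseNeg_right (ih X)))
  | allL t _ ih => exact swapL (allL t (swapL (ih X)))
  | allR _ ih =>
    rw [eraseNeg_cons_of_ne (by simp)]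
    exact allR (by simpa [eraseNeg_map_shift] using cons_eraseNeg_right (ih X.shift))
  | exL _ ih => exact swapL (exL (by simpa [eraseNeg_map_shift] using swapL (ih X.shift)))
  | exR t _ ih => rw [eraseNeg_cons_of_ne (by simp)]; exact exR t (cons_eraseNeg_right (ih X))

theorem invert_negL_eraseNeg (h : Cl Γ Δ) (X : Fm) : Cl (eraseNeg X Γ) (X :: Δ) := by
  induction h generalizing X with
  | ax A =>
    by_cases hA : A = .neg X
    · subst hA
      exact swapR (negR (by simpa using ax X))
    · rw [eraseNeg_cons_of_ne hA]
      exact weakR (ax A)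
  | perm p₁ p₂ _ ih => exact perm (eraseNeg_perm p₁) (p₂.cons X) (ih X)
  | @contrL _ _ A _ ih =>
    by_cases hA : A = .neg X
    · subst hA
      simpa using ih X
    · simpa [eraseNeg_cons_of_ne hA] using contrL (by simpa [eraseNeg_cons_of_ne hA] using ih X)
  | contrR _ ih => exact swapR (contrR (permR ((List.Perm.swap _ _ _).cons _) (swapR (ih X))))
  | weakL _ ih => exact of_sublist_left eraseNeg_sublist_eraseNeg_cons (ih X)
  | weakR _ ih => exact swapR (weakR (ih X))
  | topR => exact swapR topR
  | botL => rw [eraseNeg_cons_of_ne (by simp)]; exact botL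
  | @negL _ _ A _ ih =>
    by_cases hA : A = X
    · subst hA
      simpa using contrR (ih A)
    · rw [eraseNeg_cons_of_ne (by simpa using hA)]
      exact negL (swapR (ih X))
  | negR _ ih => exact swapR (negR (cons_eraseNeg_left (ih X)))
  | andL _ ih =>
    rw [eraseNeg_cons_of_ne (by simp)]
    refine andL (of_sublist_left ?_ (ih X))
    exact eraseNeg_cons_sublist.trans (eraseNeg_cons_sublist.cons_cons _)
  | andR _ _ ih₁ ih₂ => exact swapR (andR (swapR (ih₁ X)) (swapR (ih₂ X)))
  | orL _ _ ih₁ ih₂ =>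
    rw [eraseNeg_cons_of_ne (by simp)]
    exact orL (cons_eraseNeg_left (ih₁ X)) (cons_eraseNeg_left (ih₂ X))
  | orR1 _ ih => exact swapR (orR1 (swapR (ih X)))
  | orR2 _ ih => exact swapR (orR2 (swapR (ih X)))
  | impL _ _ ih₁ ih₂ =>
    rw [eraseNeg_cons_of_ne (by simp)]
    exact impL (swapR (ih₁ X)) (cons_eraseNeg_left (ih₂ X))
  | impR _ ih => exact swapR (impR (swapR (cons_eraseNeg_left (ih X))))
  | allL t _ ih => rw [eraseNeg_cons_of_ne (by simp)]; exact allL t (cons_eraseNeg_left (ih X))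
  | allR _ ih => exact swapR (allR (by simpa [eraseNeg_map_shift] using swapR (ih X.shift)))
  | exL _ ih =>
    rw [eraseNeg_cons_of_ne (by simp)]
    exact exL (by simpa [eraseNeg_map_shift] using cons_eraseNeg_left (ih X.shift))
  | exR t _ ih => exact swapR (exR t (swapR (ih X)))

theorem invert_negR (h : Cl Γ (.neg X :: Δ)) : Cl (X :: Γ) Δ :=
  of_sublist_right eraseNeg_sublist (by simpa using invert_negR_eraseNeg h X)

theorem invert_negL (h : Cl (.neg X :: Γ) Δ) : Cl Γ (X :: Δ) :=
  of_sublist_left eraseNeg_sublist (by simpa using invert_negL_eraseNeg h X)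

end inversion

end Cl

theorem forall₂_collapse_eq_map_shift {Γ Γ' : List Fm}
    (h : List.Forall₂ (fun A B => A.collapse = B.collapse) Γ Γ') :
    List.Forall₂ (fun A B => A.collapse = B.collapse) (Γ.map Fm.shift) (Γ'.map Fm.shift) :=
  List.forall₂_map_left_iff.2 <| List.forall₂_map_right_iff.2 <| h.imp fun A B hAB => by
    simp only [Fm.shift, Fm.collapse_rename, hAB]

theorem Cl.of_forall₂_collapse_eq {Γ Δ Γ' Δ' : List Fm} (h : Cl Γ Δ)
    (hΓ : List.Forall₂ (fun A B => A.collapse = B.collapse) Γ Γ')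
    (hΔ : List.Forall₂ (fun A B => A.collapse = B.collapse) Δ Δ') : Cl Γ' Δ' := by
  induction h generalizing Γ' Δ' with
  | ax A =>
    obtain - | ⟨hX, ⟨⟩⟩ := hΓ
    obtain - | ⟨hY, ⟨⟩⟩ := hΔ
    exact of_collapse_eq (hX.symm.trans hY)
  | perm p₁ p₂ _ ih =>
    obtain ⟨Γ₀, hΓ₀, q₁⟩ := List.perm_comp_forall₂ p₁ hΓ
    obtain ⟨Δ₀, hΔ₀, q₂⟩ := List.perm_comp_forall₂ p₂ hΔ
    exact perm q₁ q₂ (ih hΓ₀ hΔ₀)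
  | contrL _ ih =>
    obtain - | ⟨hX, hΓ⟩ := hΓ
    exact contrL (ih (.cons hX (.cons hX hΓ)) hΔ)
  | contrR _ ih =>
    obtain - | ⟨hY, hΔ⟩ := hΔ
    exact contrR (ih hΓ (.cons hY (.cons hY hΔ)))
  | weakL _ ih =>
    obtain - | ⟨-, hΓ⟩ := hΓ
    exact weakL (ih hΓ hΔ)
  | weakR _ ih =>
    obtain - | ⟨-, hΔ⟩ := hΔ
    exact weakR (ih hΓ hΔ)
  | topR =>
    obtain - | ⟨hY, -⟩ := hΔ
    exact of_stripDN_right (Fm.stripDN_of_collapse_eq_top hY.symm ▸ topR)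
  | botL =>
    obtain - | ⟨hX, -⟩ := hΓ
    exact of_stripDN_left (Fm.stripDN_of_collapse_eq_bot hX.symm ▸ botL)
  | negL _ ih =>
    obtain - | ⟨hX, hΓ⟩ := hΓ
    exact invert_negR (ih hΓ (.cons (Fm.collapse_neg_eq_comm hX) hΔ))
  | negR _ ih =>
    obtain - | ⟨hY, hΔ⟩ := hΔ
    exact invert_negL (ih (.cons (Fm.collapse_neg_eq_comm hY) hΓ) hΔ)
  | andL _ ih =>
    obtain - | ⟨hX, hΓ⟩ := hΓ
    obtain ⟨X₁, X₂, hX, h₁, h₂⟩ := Fm.stripDN_of_collapse_eq_and hX.symm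
    exact of_stripDN_left (hX ▸ andL (ih (.cons h₁.symm (.cons h₂.symm hΓ)) hΔ))
  | andR _ _ ih₁ ih₂ =>
    obtain - | ⟨hY, hΔ⟩ := hΔ
    obtain ⟨Y₁, Y₂, hY, h₁, h₂⟩ := Fm.stripDN_of_collapse_eq_and hY.symm
    exact of_stripDN_right (hY ▸ andR (ih₁ hΓ (.cons h₁.symm hΔ)) (ih₂ hΓ (.cons h₂.symm hΔ)))
  | orL _ _ ih₁ ih₂ =>
    obtain - | ⟨hX, hΓ⟩ := hΓ
    obtain ⟨X₁, X₂, hX, h₁, h₂⟩ := Fm.stripDN_of_collapse_eq_or hX.symm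
    exact of_stripDN_left (hX ▸ orL (ih₁ (.cons h₁.symm hΓ) hΔ) (ih₂ (.cons h₂.symm hΓ) hΔ))
  | orR1 _ ih =>
    obtain - | ⟨hY, hΔ⟩ := hΔ
    obtain ⟨Y₁, Y₂, hY, h₁, -⟩ := Fm.stripDN_of_collapse_eq_or hY.symm
    exact of_stripDN_right (hY ▸ orR1 (ih hΓ (.cons h₁.symm hΔ)))
  | orR2 _ ih =>
    obtain - | ⟨hY, hΔ⟩ := hΔ
    obtain ⟨Y₁, Y₂, hY, -, h₂⟩ := Fm.stripDN_of_collapse_eq_or hY.symm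
    exact of_stripDN_right (hY ▸ orR2 (ih hΓ (.cons h₂.symm hΔ)))
  | impL _ _ ih₁ ih₂ =>
    obtain - | ⟨hX, hΓ⟩ := hΓ
    obtain ⟨X₁, X₂, hX, h₁, h₂⟩ := Fm.stripDN_of_collapse_eq_imp hX.symm
    exact of_stripDN_left (hX ▸ impL (ih₁ hΓ (.cons h₁.symm hΔ)) (ih₂ (.cons h₂.symm hΓ) hΔ))
  | impR _ ih =>
    obtain - | ⟨hY, hΔ⟩ := hΔ
    obtain ⟨Y₁, Y₂, hY, h₁, h₂⟩ := Fm.stripDN_of_collapse_eq_imp hY.symm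
    exact of_stripDN_right (hY ▸ impR (ih (.cons h₁.symm hΓ) (.cons h₂.symm hΔ)))
  | @allL _ _ A t _ ih =>
    obtain - | ⟨hX, hΓ⟩ := hΓ
    obtain ⟨X₁, hX, h₁⟩ := Fm.stripDN_of_collapse_eq_all hX.symm
    have h₁t : (A.inst t).collapse = (X₁.inst t).collapse := by
      simp only [Fm.inst, Fm.collapse_subst, h₁]
    exact of_stripDN_left (hX ▸ allL t (ih (.cons h₁t hΓ) hΔ))
  | allR _ ih =>
    obtain - | ⟨hY, hΔ⟩ := hΔ
    obtain ⟨Y₁, hY, h₁⟩ := Fm.stripDN_of_collapse_eq_all hY.symm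
    refine of_stripDN_right (hY ▸ allR (ih (forall₂_collapse_eq_map_shift hΓ) ?_))
    exact .cons h₁.symm (forall₂_collapse_eq_map_shift hΔ)
  | exL _ ih =>
    obtain - | ⟨hX, hΓ⟩ := hΓ
    obtain ⟨X₁, hX, h₁⟩ := Fm.stripDN_of_collapse_eq_ex hX.symm
    refine of_stripDN_left (hX ▸ exL (ih ?_ (forall₂_collapse_eq_map_shift hΔ)))
    exact .cons h₁.symm (forall₂_collapse_eq_map_shift hΓ)
  | @exR _ _ A t _ ih =>
    obtain - | ⟨hY, hΔ⟩ := hΔ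
    obtain ⟨Y₁, hY, h₁⟩ := Fm.stripDN_of_collapse_eq_ex hY.symm
    have h₁t : (A.inst t).collapse = (Y₁.inst t).collapse := by
      simp only [Fm.inst, Fm.collapse_subst, h₁]
    exact of_stripDN_right (hY ▸ exR t (ih hΓ (.cons h₁t hΔ)))

theorem Intu.toCl {Γ : List Fm} {δ : Option Fm} (h : Intu Γ δ) : Cl Γ δ.toList := by
  induction h with
  | ax A => exact .ax A
  | perm p _ ih => exact ih.permL p
  | contrL _ ih => exact ih.contrL
  | weakL _ ih => exact ih.weakL
  | weakR _ ih => exact ih.weakR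
  | topR => exact .topR
  | botL => exact .botL
  | negL _ ih => exact ih.negL
  | negR _ ih => exact ih.negR
  | andL _ ih => exact ih.andL
  | andR _ _ ih₁ ih₂ => exact ih₁.andR ih₂
  | orL _ _ ih₁ ih₂ => exact ih₁.orL ih₂
  | orR1 _ ih => exact ih.orR1
  | orR2 _ ih => exact ih.orR2
  | impL _ _ ih₁ ih₂ => exact (ih₁.of_sublist_right (by simp)).impL ih₂
  | impR _ ih => exact ih.impR
  | allL t _ ih => exact ih.allL t
  | allR _ ih => exact ih.allR
  | exL _ ih => exact .exL (by rwa [Option.toList_map] at ih)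
  | exR t _ ih => exact ih.exR t

theorem Cl.not_nil_of_forall_isAtom {Δ : List Fm} (hΔ : ∀ A ∈ Δ, A.isAtom) : ¬Cl [] Δ := by
  intro h
  generalize hΓ : [] = Γ at h
  induction h with
  | perm p₁ p₂ _ ih =>
    subst hΓ
    exact ih (fun A hA => hΔ A (p₂.subset hA)) (List.perm_nil.1 p₁).symm
  | contrR _ ih => exact ih (by simp_all) hΓ
  | weakR _ ih => exact ih (by simp_all) hΓ
  -- any other rule either introduces a non-atomic formula on the right or needs a hypothesis
  | _ => first | cases hΔ _ List.mem_cons_self | cases hΓ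

namespace Intu

variable {Γ Δ : List Fm} {A : Fm}

theorem dnL (h : Intu (A :: Γ) none) : Intu (A.dn :: Γ) none := negL (negR h)

theorem neg_bar_of_neg_light (h : Intu (.neg A.light :: Γ) none) :
    Intu (.neg A.bar :: Γ) none := by
  by_cases hA : A.isAtom
  · cases A <;> first | exact h | exact absurd hA id
  · rw [Fm.bar_eq_dn_light hA]
    exact dnL h

theorem dn_bar_of_neg_light (h : Intu (Γ ++ .neg A.light :: Δ) none) :
    Intu (Γ ++ Δ) (some A.bar.dn) :=
  negR (neg_bar_of_neg_light (perm List.perm_middle h))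

theorem bar_neg_light (A : Fm) : Intu [A.bar, .neg A.light] none := by
  by_cases hA : A.isAtom
  · cases A <;> first | exact perm (.swap _ _ _) (negL (ax _)) | exact absurd hA id
  · rw [Fm.bar_eq_dn_light hA]
    exact negL (ax _)

end Intu

theorem map_shift_bar_append_neg_light (Γ Δ : List Fm) :
    (Γ.map Fm.shift).map Fm.bar ++ (Δ.map Fm.shift).map (Fm.neg ∘ Fm.light) =
      (Γ.map Fm.bar ++ Δ.map (Fm.neg ∘ Fm.light)).map Fm.shift := by
  simp only [List.map_map, List.map_append, Function.comp_def, Fm.bar_shift, Fm.light_shift]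
  rfl

theorem Cl.intu_bar_neg_light {Γ Δ : List Fm} (h : Cl Γ Δ) :
    Intu (Γ.map Fm.bar ++ Δ.map (Fm.neg ∘ Fm.light)) none := by
  induction h with
  | ax A => exact Intu.bar_neg_light A
  | perm p₁ p₂ _ ih => exact ih.perm ((p₁.map _).append (p₂.map _))
  | contrL _ ih => exact ih.contrL
  | contrR _ ih =>
    have h := ih.perm (List.perm_middle.trans (.cons _ List.perm_middle))
    exact .perm List.perm_middle.symm h.contrL
  | weakL _ ih => exact ih.weakL
  | weakR _ ih => exact .perm List.perm_middle.symm ih.weakL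
  | topR => exact .perm List.perm_middle.symm (.negL .topR)
  | botL => exact .dnL .botL
  | negL _ ih => exact .dnL (.dnL (.neg_bar_of_neg_light (.perm List.perm_middle ih)))
  | negR _ ih => exact .perm List.perm_middle.symm (.dnL (.dnL ih))
  | andL _ ih => exact .dnL (.andL (.perm (.swap _ _ _) (.dnL (.perm (.swap _ _ _) (.dnL ih)))))
  | andR _ _ ih₁ ih₂ =>
    have h := Intu.andR (.dn_bar_of_neg_light ih₁) (.dn_bar_of_neg_light ih₂)
    exact .perm List.perm_middle.symm (.negL h)
  | orL _ _ ih₁ ih₂ => exact .dnL (.orL (.dnL ih₁) (.dnL ih₂))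
  | orR1 _ ih => exact .perm List.perm_middle.symm (.negL (.orR1 (.dn_bar_of_neg_light ih)))
  | orR2 _ ih => exact .perm List.perm_middle.symm (.negL (.orR2 (.dn_bar_of_neg_light ih)))
  | impL _ _ ih₁ ih₂ => exact .dnL (.impL (.dn_bar_of_neg_light ih₁) (.dnL ih₂))
  | impR _ ih =>
    rw [List.map_cons, List.map_cons, List.cons_append] at ih
    have h := Intu.neg_bar_of_neg_light (.perm ((List.perm_middle.cons _).trans (.swap _ _ _)) ih)
    exact .perm List.perm_middle.symm
      (.negL (.impR (.negR (.perm (.swap _ _ _) (.dnL (.perm (.swap _ _ _) h))))))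
  | allL t _ ih =>
    rw [List.map_cons, Fm.bar_inst] at ih
    exact .dnL (.allL t (.dnL ih))
  | allR _ ih =>
    have h := Intu.dn_bar_of_neg_light ih
    rw [map_shift_bar_append_neg_light] at h
    exact .perm List.perm_middle.symm (.negL (.allR h))
  | exL _ ih =>
    rw [List.map_cons, List.cons_append, map_shift_bar_append_neg_light] at ih
    exact .dnL (.exL (Δ := none) (.dnL ih))
  | exR t _ ih =>
    have h := Intu.dn_bar_of_neg_light ih
    rw [Fm.bar_inst] at h
    exact .perm List.perm_middle.symm (.negL (.exR t h))

theorem stmt4 (A : Fm) : Cl [] [A] ↔ Intu [] (some A.bar) := by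
  constructor
  · intro h
    have hA : ¬A.isAtom := fun hA => Cl.not_nil_of_forall_isAtom (by simpa using hA) h
    rw [Fm.bar_eq_dn_light hA]
    exact .negR h.intu_bar_neg_light
  · intro h
    exact h.toCl.of_forall₂_collapse_eq .nil (.cons (Fm.collapse_bar A) .nil)
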